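/- arXiv:1410.3313 — 4 statements merged into one kernel-verified Lean document; each statement's English description precedes it below -/
import Mathlib

section
/- Let G be a nontrivial abelian group of finite exponent, written as G = ⨁_{p ∈ π(G)} ⨁_{i=1}^{m_p} (Z/p^i)^(α_{p,i}) with α_{p,m_p} > 0 for each p ∈ π(G). If for every positive integer m either mG = 0 or mG is infinite, then every leading Ulm-Kaplanski invariant α_{p,m_p} is infinite. -/
/-!
Let `k = p ^ (m p - 1) * ∏_{q ≠ p} q ^ (m q)`. Multiplication by `k` kills every cyclic summand
`ℤ/qⁱ` except the leading summands `ℤ/p^(m p)`, on which it is nonzero.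
Hence `kG ≠ 0`, so `kG` is infinite; but `kG` lies in the sum of the leading summands, which
are finite and indexed by `ι p (m p)`, so this index type must be infinite.
-/

open Finset

section CyclicSum

variable {σ : Type*} {n : σ → ℕ}

theorem DFinsupp.nsmul_apply_eq_zero_of_dvd (f : Π₀ x, ZMod (n x)) {k : ℕ} {x : σ}
    (h : n x ∣ k) : (k • f) x = 0 := by
  rw [DFinsupp.smul_apply, nsmul_eq_mul, (ZMod.natCast_eq_zero_iff k _).2 h, zero_mul]

theorem DFinsupp.nsmul_single_one_ne_zero [DecidableEq σ] {k : ℕ} {x : σ} (h : ¬ n x ∣ k) :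
    k • (DFinsupp.single x 1 : Π₀ y, ZMod (n y)) ≠ 0 := by
  intro h0
  have := DFunLike.congr_fun h0 x
  rw [DFinsupp.smul_apply, DFinsupp.single_eq_same, nsmul_eq_mul, mul_one,
    DFinsupp.zero_apply, ZMod.natCast_eq_zero_iff] at this
  exact h this

theorem DFinsupp.finite_range_nsmul (hn : ∀ x, n x ≠ 0) {k : ℕ}
    (hk : {x | ¬ n x ∣ k}.Finite) :
    (Set.range fun f : Π₀ x, ZMod (n x) => k • f).Finite := by
  have : Finite {x | ¬ n x ∣ k} := hk
  have : ∀ x, NeZero (n x) := fun x => ⟨hn x⟩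
  rw [← Set.finite_coe_iff]
  refine Finite.of_injective (fun f x => (f : Π₀ x, ZMod (n x)) (x : {x | ¬ n x ∣ k})) ?_
  rintro ⟨_, f, rfl⟩ ⟨_, g, rfl⟩ hfg
  ext x : 2
  by_cases hx : n x ∣ k
  · rw [nsmul_apply_eq_zero_of_dvd f hx, nsmul_apply_eq_zero_of_dvd g hx]
  · exact congr_fun hfg ⟨x, hx⟩

end CyclicSum

theorem AddEquiv.finite_range_nsmul_iff {G H : Type*} [AddCommGroup G] [AddCommGroup H]
    (e : G ≃+ H) (k : ℕ) :
    (Set.range fun g : G => k • g).Finite ↔ (Set.range fun h : H => k • h).Finite := by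
  have : (Set.range fun h : H => k • h) = e '' Set.range fun g : G => k • g := by
    rw [← Set.range_comp', ← e.surjective.range_comp]
    simp only [Function.comp_def, map_nsmul]
  rw [this, Set.finite_image_iff e.injective.injOn]

theorem Nat.not_pow_succ_dvd_pow_mul {p a P : ℕ} (hp : p.Prime) (hP : ¬ p ∣ P) :
    ¬ p ^ (a + 1) ∣ p ^ a * P := by
  rw [pow_succ]
  exact fun h => hP (Nat.dvd_of_mul_dvd_mul_left (pow_pos hp.pos a) h)

theorem Nat.not_dvd_prod_erase_pow {S : Finset ℕ} (hS : ∀ q ∈ S, q.Prime) {p : ℕ}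
    (hp : p ∈ S) (m : ℕ → ℕ) : ¬ p ∣ ∏ q ∈ S.erase p, q ^ m q := by
  refine ((hS p hp).coprime_iff_not_dvd).1 (Nat.Coprime.prod_right fun q hq => ?_)
  exact ((Nat.coprime_primes (hS p hp) (hS q (mem_of_mem_erase hq))).2
    (ne_of_mem_erase hq).symm).pow_right _

theorem Nat.pow_dvd_pow_pred_mul_prod_erase_pow {S : Finset ℕ} {m : ℕ → ℕ} {p q i : ℕ}
    (hq : q ∈ S) (hi : i < m q) (h : ¬ (q = p ∧ i = m p - 1)) :
    q ^ (i + 1) ∣ p ^ (m p - 1) * ∏ r ∈ S.erase p, r ^ m r := by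
  by_cases hqp : q = p
  · subst hqp
    exact dvd_mul_of_dvd_left (pow_dvd_pow q (by omega)) _
  · exact dvd_mul_of_dvd_right ((pow_dvd_pow q hi).trans
      (dvd_prod_of_mem (fun r => r ^ m r) (mem_erase.2 ⟨hqp, hq⟩))) _

abbrev UlmIndex (S : Finset ℕ) (m : ℕ → ℕ) (ι : ℕ → ℕ → Type) :=
  Σ p : {p : ℕ // p ∈ S}, Σ i : Fin (m p.1), ι p.1 (i.1 + 1)

namespace UlmIndex

variable {S : Finset ℕ} {m : ℕ → ℕ} {ι : ℕ → ℕ → Type}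

theorem finite_setOf_prime_eq_and_exp_eq {p i : ℕ} (hp : p ∈ S) (hi : i < m p)
    [Finite (ι p (i + 1))] : {x : UlmIndex S m ι | x.1.1 = p ∧ x.2.1.1 = i}.Finite := by
  refine (Set.finite_range fun j : ι p (i + 1) =>
    (⟨⟨p, hp⟩, ⟨i, hi⟩, j⟩ : UlmIndex S m ι)).subset ?_
  rintro ⟨⟨q, hq⟩, ⟨i', hi'⟩, j⟩ ⟨rfl, rfl⟩
  exact ⟨j, rfl⟩

theorem setOf_not_pow_dvd_subset (p : ℕ) :
    {x : UlmIndex S m ι |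
        ¬ x.1.1 ^ (x.2.1.1 + 1) ∣ p ^ (m p - 1) * ∏ q ∈ S.erase p, q ^ m q} ⊆
      {x | x.1.1 = p ∧ x.2.1.1 = m p - 1} := by
  rintro ⟨⟨q, hq⟩, ⟨i, hi⟩, j⟩ hx
  by_contra h
  exact hx (Nat.pow_dvd_pow_pred_mul_prod_erase_pow hq hi h)

end UlmIndex

theorem leading_ulm_kaplanski_infinite_general (G : Type*) [AddCommGroup G]
    (S : Finset ℕ) (hS : ∀ p ∈ S, p.Prime)
    (m : ℕ → ℕ) (hm : ∀ p ∈ S, 1 ≤ m p)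
    (ι : ℕ → ℕ → Type)
    (hlead : ∀ p ∈ S, Nonempty (ι p (m p)))
    (e : G ≃+ Π₀ x : (Σ p : {p : ℕ // p ∈ S}, Σ i : Fin (m p.1), ι p.1 (i.1 + 1)),
      ZMod (x.1.1 ^ (x.2.1.1 + 1)))
    (hcon : ∀ k : ℕ, 0 < k →
      (∀ g : G, k • g = 0) ∨ (Set.range fun g : G => k • g).Infinite) :
    ∀ p ∈ S, Infinite (ι p (m p)) := by
  classical
  intro p hp
  have hi : m p - 1 < m p := by have := hm p hp; omega
  have hsucc : m p - 1 + 1 = m p := by omega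
  set k := p ^ (m p - 1) * ∏ q ∈ S.erase p, q ^ m q
  have hk : 0 < k := Nat.pos_of_ne_zero <| mul_ne_zero (pow_ne_zero _ (hS p hp).ne_zero) <|
    prod_ne_zero_iff.2 fun q hq => pow_ne_zero _ (hS q (mem_of_mem_erase hq)).ne_zero
  rcases hcon k hk with hzero | hinf
  · obtain ⟨j⟩ := hlead p hp
    rw [← hsucc] at j
    let x₀ : UlmIndex S m ι := ⟨⟨p, hp⟩, ⟨m p - 1, hi⟩, j⟩
    have hx₀ : ¬ x₀.1.1 ^ (x₀.2.1.1 + 1) ∣ k :=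
      Nat.not_pow_succ_dvd_pow_mul (hS p hp) (Nat.not_dvd_prod_erase_pow hS hp m)
    refine absurd ?_ <| DFinsupp.nsmul_single_one_ne_zero
      (n := fun x : UlmIndex S m ι => x.1.1 ^ (x.2.1.1 + 1)) hx₀
    rw [← e.symm.map_eq_zero_iff, map_nsmul]
    exact hzero _
  · refine not_finite_iff_infinite.1 fun hfin => hinf ?_
    rw [e.finite_range_nsmul_iff]
    refine DFinsupp.finite_range_nsmul (fun x => pow_ne_zero _ (hS _ x.1.2).ne_zero) ?_
    have : Finite (ι p (m p - 1 + 1)) := by rwa [hsucc]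
    exact (UlmIndex.finite_setOf_prime_eq_and_exp_eq hp hi).subset
      (UlmIndex.setOf_not_pow_dvd_subset p)

/-- Let `G` be a nontrivial abelian group of finite exponent, written as
`G = ⨁_{p ∈ S} ⨁_{i=1}^{m p} (ℤ/pⁱ)^(α_{p,i})` (the index types `ι p i` realize the
Ulm-Kaplanski invariants `α_{p,i}`, with the leading ones `ι p (m p)` nonempty).
If for every positive integer `k` either `kG = 0` or `kG` is infinite, then every
leading Ulm-Kaplanski invariant is infinite. -/
theorem leading_ulm_kaplanski_infinite (G : Type*) [AddCommGroup G]
    (S : Finset ℕ) (hS : ∀ p ∈ S, p.Prime) (hSne : S.Nonempty)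
    (m : ℕ → ℕ) (hm : ∀ p ∈ S, 1 ≤ m p)
    (ι : ℕ → ℕ → Type)
    (hlead : ∀ p ∈ S, Nonempty (ι p (m p)))
    (e : G ≃+ Π₀ x : (Σ p : {p : ℕ // p ∈ S}, Σ i : Fin (m p.1), ι p.1 (i.1 + 1)),
      ZMod (x.1.1 ^ (x.2.1.1 + 1)))
    (hcon : ∀ k : ℕ, 0 < k →
      (∀ g : G, k • g = 0) ∨ (Set.range fun g : G => k • g).Infinite) :
    ∀ p ∈ S, Infinite (ι p (m p)) :=
  leading_ulm_kaplanski_infinite_general G S hS m hm ι hlead e hcon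
end

section
/- Let G be a nontrivial abelian group of finite exponent whose leading Ulm-Kaplanski invariants are all infinite. Then for every positive integer m, either mG = {0} or mG is infinite. -/
/-! If `k • g ≠ 0` for some `g : G`, some coordinate `ZMod (pⁱ⁺¹)` of the decomposition is not
killed by `k`, i.e. `pⁱ⁺¹ ∤ k`. Then `pᵐ⁽ᵖ⁾ ∤ k` as well, so `k` does not kill the generator `1`
of any leading summand `ZMod (pᵐ⁽ᵖ⁾)`; as there are infinitely many of these, the multiples
`k • single j 1` form an infinite subset of `kG`. -/

theorem ZMod.natCast_ne_zero_of_nsmul_ne_zero {n k : ℕ} {x : ZMod n} (h : k • x ≠ 0) :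
    (k : ZMod n) ≠ 0 :=
  fun hk => h (by rw [nsmul_eq_mul, hk, zero_mul])

theorem ZMod.natCast_ne_zero_of_dvd {n N k : ℕ} (hnN : n ∣ N) (h : (k : ZMod n) ≠ 0) :
    (k : ZMod N) ≠ 0 := by
  rw [Ne, ZMod.natCast_eq_zero_iff] at h ⊢
  exact fun hNk => h (hnN.trans hNk)

theorem AddEquiv.infinite_range_nsmul_iff {G H : Type*} [AddCommMonoid G] [AddCommMonoid H]
    (e : G ≃+ H) (k : ℕ) :
    (Set.range fun g : G => k • g).Infinite ↔ (Set.range fun h : H => k • h).Infinite := by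
  have hrange : (Set.range fun h : H => k • h) = e '' Set.range fun g : G => k • g := by
    rw [← Set.range_comp, ← e.symm.surjective.range_comp]
    congr 1
    ext h
    simp
  rw [hrange, Set.infinite_image_iff e.injective.injOn]

theorem DFinsupp.infinite_range_nsmul {ι J : Type*} [DecidableEq ι] [Infinite J]
    {β : ι → Type*} [∀ i, AddCommMonoid (β i)] {f : J → ι} (hf : Function.Injective f)
    {k : ℕ} (c : ∀ j, β (f j)) (hc : ∀ j, k • c j ≠ 0) :
    (Set.range fun x : Π₀ i, β i => k • x).Infinite := by
  refine Set.infinite_of_injective_forall_mem (f := fun j => single (f j) (k • c j))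
    (fun j₁ j₂ h => ?_) fun j => ⟨single (f j) (c j), (single_smul _ _).symm⟩
  rcases (single_eq_single_iff _ _ _ _).mp h with ⟨hj, -⟩ | ⟨hzero, -⟩
  · exact hf hj
  · exact absurd hzero (hc j₁)

theorem smul_range_trivial_or_infinite_of_leading_infinite_general (G : Type*) [AddCommGroup G]
    (S : Finset ℕ)
    (m : ℕ → ℕ)
    (ι : ℕ → ℕ → Type)
    (hlead : ∀ p ∈ S, Infinite (ι p (m p)))
    (e : G ≃+ Π₀ x : (Σ p : {p : ℕ // p ∈ S}, Σ i : Fin (m p.1), ι p.1 (i.1 + 1)),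
      ZMod (x.1.1 ^ (x.2.1.1 + 1))) :
    ∀ k : ℕ, 0 < k →
      (∀ g : G, k • g = 0) ∨ (Set.range fun g : G => k • g).Infinite := by
  classical
  intro k _
  rw [or_iff_not_imp_left, not_forall, e.infinite_range_nsmul_iff]
  rintro ⟨g, hg⟩
  have hkeg : k • e g ≠ 0 := by
    rwa [← map_nsmul, e.map_ne_zero_iff]
  obtain ⟨⟨⟨p, hp⟩, i, a⟩, hi⟩ := DFinsupp.ne_iff.mp hkeg
  have hk : (k : ZMod (p ^ (i.1 + 1))) ≠ 0 := ZMod.natCast_ne_zero_of_nsmul_ne_zero hi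
  have hi_lt : i.1 < m p := i.2
  -- `Fin (m p)` is 0-based: summand `i` is `ZMod (p ^ (i + 1))`, so the leading one has index `m p - 1`.
  have hlast : m p - 1 + 1 = m p := by omega
  have : Infinite (ι p (m p - 1 + 1)) := hlast ▸ hlead p hp
  let leading : ι p (m p - 1 + 1) → Σ q : {q : ℕ // q ∈ S}, Σ i : Fin (m q.1), ι q.1 (i.1 + 1) :=
    fun j => ⟨⟨p, hp⟩, ⟨m p - 1, show m p - 1 < m p by omega⟩, j⟩
  have hleading : Function.Injective leading := fun j₁ j₂ h => by
    simpa only [leading, Sigma.mk.injEq, heq_eq_eq, true_and] using h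
  refine DFinsupp.infinite_range_nsmul hleading (fun _ => 1) fun _ => ?_
  rw [nsmul_one]
  exact ZMod.natCast_ne_zero_of_dvd (Nat.pow_dvd_pow p (show i.1 + 1 ≤ m p - 1 + 1 by omega)) hk

/-- Let `G` be a nontrivial abelian group of finite exponent, written as
`G = ⨁_{p ∈ S} ⨁_{i=1}^{m p} (ℤ/pⁱ)^(α_{p,i})` (the index types `ι p i` realize the
Ulm-Kaplanski invariants `α_{p,i}`). If all leading Ulm-Kaplanski invariants
`ι p (m p)` are infinite, then for every positive integer `k` either `kG = {0}` or
`kG` is infinite. -/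
theorem smul_range_trivial_or_infinite_of_leading_infinite (G : Type*) [AddCommGroup G]
    (S : Finset ℕ) (hS : ∀ p ∈ S, p.Prime) (hSne : S.Nonempty)
    (m : ℕ → ℕ) (hm : ∀ p ∈ S, 1 ≤ m p)
    (ι : ℕ → ℕ → Type)
    (hlead : ∀ p ∈ S, Infinite (ι p (m p)))
    (e : G ≃+ Π₀ x : (Σ p : {p : ℕ // p ∈ S}, Σ i : Fin (m p.1), ι p.1 (i.1 + 1)),
      ZMod (x.1.1 ^ (x.2.1.1 + 1))) :
    ∀ k : ℕ, 0 < k →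
      (∀ g : G, k • g = 0) ∨ (Set.range fun g : G => k • g).Infinite :=
  smul_range_trivial_or_infinite_of_leading_infinite_general G S m ι hlead e
end

section
/- Let G be a topological group. If a family of topological groups (G_i)_{i ∈ I} each has the property that every continuous homomorphism G_i → ℝ/ℤ is trivial, then every continuous homomorphism from the product ∏_{i ∈ I} G_i (with the product topology) to ℝ/ℤ is trivial. -/
/-!
A neighbourhood of `0` in `ℝ/ℤ` (the ball of radius `1/4`) contains no nonzero subgroup: as long
as `n ‖x‖` stays below half the period, `‖n • x‖ = n ‖x‖`, so the multiples of a nonzero `x`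
eventually leave the ball. Hence a continuous character `χ` of `∏ i, G i` kills the subgroup of
elements supported off some finite set `F` of coordinates (the preimage of the ball contains a basic
open set constraining only the coordinates in `F`), so `χ x = ∑ i ∈ F, χ (Pi.single i (x i))`, and
every summand is a continuous character of a factor, hence zero.
-/

open Filter Topology

namespace AddCircle

variable {p : ℝ}

theorem norm_nsmul_eq_mul_norm (hp : p ≠ 0) {x : AddCircle p} {n : ℕ}
    (hn : n * ‖x‖ ≤ |p| / 2) : ‖n • x‖ = n * ‖x‖ := by
  obtain ⟨t, rfl⟩ := QuotientAddGroup.mk_surjective x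
  set s := t - round (p⁻¹ * t) * p
  have hs : (s : AddCircle p) = t := by
    have hperiod : ((round (p⁻¹ * t) * p : ℝ) : AddCircle p) = 0 :=
      (coe_eq_zero_iff p).mpr ⟨_, zsmul_eq_mul _ _⟩
    rw [QuotientAddGroup.mk_sub, hperiod, sub_zero]
  have hnorm : ‖(t : AddCircle p)‖ = |s| := norm_eq p
  have habs : |(n : ℝ) * s| = n * |s| := by rw [abs_mul, Nat.abs_cast]
  rw [hnorm, ← hs, ← coe_nsmul, nsmul_eq_mul, ← habs, norm_coe_eq_abs_iff p hp, habs, ← hnorm]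
  exact hn

theorem eq_zero_of_forall_norm_nsmul_lt (hp : p ≠ 0) {x : AddCircle p}
    (h : ∀ n : ℕ, ‖n • x‖ < |p| / 4) : x = 0 := by
  have hx : ‖x‖ < |p| / 4 := by simpa using h 1
  have hmul : ∀ n : ℕ, n * ‖x‖ < |p| / 4 := by
    intro n
    induction n with
    | zero => simp [hp]
    | succ n ih =>
      have hle : ((n + 1 : ℕ) : ℝ) * ‖x‖ ≤ |p| / 2 := by push_cast; linarith
      rw [← norm_nsmul_eq_mul_norm hp hle]
      exact h (n + 1)
  by_contra hx0
  have hpos : 0 < ‖x‖ := norm_pos_iff.mpr hx0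
  obtain ⟨n, hn⟩ := exists_nat_gt (|p| / 4 / ‖x‖)
  have := hmul n
  rw [div_lt_iff₀ hpos] at hn
  linarith

end AddCircle

theorem AddMonoidHom.exists_finset_map_eq_zero_of_continuous {I : Type*} {G : I → Type*}
    [∀ i, AddCommGroup (G i)] [∀ i, TopologicalSpace (G i)] {p : ℝ} (hp : p ≠ 0)
    (χ : (∀ i, G i) →+ AddCircle p) (hχ : Continuous χ) :
    ∃ F : Finset I, ∀ y : ∀ i, G i, (∀ i ∈ F, y i = 0) → χ y = 0 := by
  have hball : χ ⁻¹' Metric.ball 0 (|p| / 4) ∈ 𝓝 (0 : ∀ i, G i) :=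
    hχ.continuousAt.preimage_mem_nhds (by
      rw [map_zero]
      exact Metric.ball_mem_nhds 0 (by positivity))
  rw [nhds_pi, mem_pi'] at hball
  obtain ⟨F, t, ht, hsub⟩ := hball
  refine ⟨F, fun y hy => AddCircle.eq_zero_of_forall_norm_nsmul_lt hp fun n => ?_⟩
  have hmem : n • y ∈ Set.pi (F : Set I) t := fun i hi => by
    rw [Pi.smul_apply, hy i hi, smul_zero]
    exact mem_of_mem_nhds (ht i)
  simpa [map_nsmul] using hsub hmem

theorem AddMonoidHom.eq_sum_single_of_map_eq_zero {I : Type*} [DecidableEq I] {G : I → Type*}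
    [∀ i, AddCommGroup (G i)] {M : Type*} [AddCommMonoid M] (χ : (∀ i, G i) →+ M)
    {F : Finset I} (hF : ∀ y : ∀ i, G i, (∀ i ∈ F, y i = 0) → χ y = 0) (x : ∀ i, G i) :
    χ x = ∑ i ∈ F, χ (Pi.single i (x i)) := by
  set xF : ∀ i, G i := ∑ i ∈ F, Pi.single i (x i)
  have hrest : χ (x - xF) = 0 := hF _ fun i hi => by
    simp [xF, Finset.sum_apply, hi]
  rw [← map_sum, ← add_zero (χ xF), ← hrest, ← map_add, add_sub_cancel]

theorem pi_minAP_general (I : Type*) (G : I → Type*) [∀ i, AddCommGroup (G i)]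
    [∀ i, TopologicalSpace (G i)]
    (h : ∀ i, ∀ χ : G i →+ AddCircle (1 : ℝ), Continuous χ → χ = 0) :
    ∀ χ : (∀ i, G i) →+ AddCircle (1 : ℝ), Continuous χ → χ = 0 := by
  classical
  intro χ hχ
  obtain ⟨F, hF⟩ := χ.exists_finset_map_eq_zero_of_continuous one_ne_zero hχ
  ext x
  rw [χ.eq_sum_single_of_map_eq_zero hF x, AddMonoidHom.zero_apply]
  refine Finset.sum_eq_zero fun i _ => ?_
  have hi := h i (χ.comp (AddMonoidHom.single G i)) (hχ.comp (continuous_single i))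
  exact DFunLike.congr_fun hi (x i)

/-- If each topological abelian group `G i` has only trivial continuous characters, then
the product `∀ i, G i` (with the product topology) has only trivial continuous characters. -/
theorem pi_minAP (I : Type*) (G : I → Type*) [∀ i, AddCommGroup (G i)]
    [∀ i, TopologicalSpace (G i)] [∀ i, IsTopologicalAddGroup (G i)]
    (h : ∀ i, ∀ χ : G i →+ AddCircle (1 : ℝ), Continuous χ → χ = 0) :
    ∀ χ : (∀ i, G i) →+ AddCircle (1 : ℝ), Continuous χ → χ = 0 :=
  pi_minAP_general I G h
end

section
/- Let G be a connected topological abelian group whose free rank r₀(G) (the maximal cardinality of a ℤ-independent subset) is strictly less than the cardinality of the continuum. Then every continuous homomorphism χ : G → ℝ/ℤ is trivial. -/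
/-!
A nonzero continuous character `χ` of a connected group has a connected image in `ℝ/ℤ`
containing a point at positive distance `r` from `0`. The norms of its points fill `[0, r]`, and
`t` is `±` a point of norm `t`, so the image contains every `t ∈ [0, r]`. Its preimage in `ℝ`
is then a neighbourhood of `0`, hence an open subgroup of the connected group `ℝ`, hence
everything: `χ` is onto. But `ℝ/ℤ` has free rank `𝔠`, since rank-nullity for `ℤ ⊆ ℝ` gives
`𝔠 = rank ℝ ≤ rank (ℝ/ℤ) + 1`, and free rank cannot grow under a surjection.
-/

open Cardinal Set Topology

theorem AddSubgroup.eq_top_of_mem_nhds_zero {G : Type*} [AddGroup G] [TopologicalSpace G]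
    [SeparatelyContinuousAdd G] [PreconnectedSpace G] {H : AddSubgroup G}
    (hH : (H : Set G) ∈ 𝓝 0) : H = ⊤ := by
  have hopen : IsOpen (H : Set G) := H.isOpen_of_mem_nhds hH
  have hclopen : IsClopen (H : Set G) := ⟨H.isClosed_of_isOpen hopen, hopen⟩
  exact SetLike.coe_injective (hclopen.eq_univ ⟨0, H.zero_mem⟩)

namespace AddCircle

variable {p : ℝ}

theorem eq_coe_norm_or_eq_neg_coe_norm (y : AddCircle p) :
    y = (‖y‖ : AddCircle p) ∨ y = -(‖y‖ : AddCircle p) := by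
  obtain ⟨x, rfl⟩ := QuotientAddGroup.mk_surjective y
  have hx : (x : AddCircle p) = ((x - round (p⁻¹ * x) * p : ℝ) : AddCircle p) := by
    rw [coe_sub, ← zsmul_eq_mul, coe_zsmul, coe_period, smul_zero, sub_zero]
  rw [show (QuotientAddGroup.mk x : AddCircle p) = (x : AddCircle p) from rfl, norm_eq, hx]
  rcases abs_choice (x - round (p⁻¹ * x) * p) with h | h <;> rw [h]
  · exact .inl rfl
  · exact .inr (by rw [← coe_neg, neg_neg])

theorem coe_mem_of_mem_norm_image {H : AddSubgroup (AddCircle p)} {t : ℝ}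
    (ht : t ∈ (‖·‖) '' (H : Set (AddCircle p))) : (t : AddCircle p) ∈ H := by
  obtain ⟨x, hxH, rfl⟩ := ht
  rcases eq_coe_norm_or_eq_neg_coe_norm x with hx | hx
  · rwa [← hx]
  · rw [← neg_neg (‖x‖ : AddCircle p), ← hx]
    exact H.neg_mem hxH

theorem addSubgroup_eq_top_of_isPreconnected {H : AddSubgroup (AddCircle p)}
    (hH : IsPreconnected (H : Set (AddCircle p))) (hne : H ≠ ⊥) : H = ⊤ := by
  obtain ⟨y, hyH, hy⟩ := H.bot_or_exists_ne_zero.resolve_left hne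
  have hr : 0 < ‖y‖ := norm_pos_iff.mpr hy
  have hIcc : Icc 0 ‖y‖ ⊆ (‖·‖) '' (H : Set (AddCircle p)) :=
    (hH.image _ continuous_norm.continuousOn).Icc_subset ⟨0, H.zero_mem, norm_zero⟩ ⟨y, hyH, rfl⟩
  set K := H.comap (QuotientAddGroup.mk' (AddSubgroup.zmultiples p))
  have hK : Icc (-‖y‖) ‖y‖ ⊆ K := fun t ht => by
    change (t : AddCircle p) ∈ H
    have habs : ((|t| : ℝ) : AddCircle p) ∈ H :=
      coe_mem_of_mem_norm_image (hIcc ⟨abs_nonneg t, abs_le.mpr ht⟩)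
    rcases abs_choice t with h | h
    · rwa [h] at habs
    · rw [h, coe_neg] at habs
      simpa using H.neg_mem habs
  have hKtop : K = ⊤ :=
    AddSubgroup.eq_top_of_mem_nhds_zero (Filter.mem_of_superset (Icc_mem_nhds (by linarith) hr) hK)
  rw [← H.map_comap_eq_self_of_surjective (QuotientAddGroup.mk'_surjective _)]
  change K.map _ = ⊤
  rw [hKtop, AddSubgroup.map_top_of_surjective _ (QuotientAddGroup.mk'_surjective _)]

theorem continuum_le_rank_int (p : ℝ) : 𝔠 ≤ Module.rank ℤ (AddCircle p) := by
  let e : (ℝ ⧸ Submodule.span ℤ {p}) ≃ₗ[ℤ] AddCircle p :=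
    (QuotientAddGroup.quotientAddEquivOfEq
      (Submodule.span_singleton_toAddSubgroup_eq_zmultiples p)).toIntLinearEquiv
  have hnullity : Module.rank ℤ (AddCircle p) + Module.rank ℤ (Submodule.span ℤ {p}) =
      Module.rank ℤ ℝ := by
    rw [← e.rank_eq]
    exact rank_quotient_add_rank_of_isDomain _
  have hℝ : 𝔠 ≤ Module.rank ℤ ℝ :=
    Real.rank_rat_real ▸ Module.rank_top_le_rank_of_isScalarTower ℤ ℚ ℝ
  have hspan : Module.rank ℤ (Submodule.span ℤ {p}) < 𝔠 :=
    (rank_span_le _).trans_lt (by simpa using one_lt_aleph0.trans_le aleph0_le_continuum)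
  by_contra! hlt
  exact (hℝ.trans_eq hnullity.symm).not_gt (add_lt_of_lt aleph0_le_continuum hlt hspan)

end AddCircle

theorem minAP_of_connected_small_rank_general (G : Type*) [AddCommGroup G] [TopologicalSpace G]
    [ConnectedSpace G]
    (hrank : Module.rank ℤ G < Cardinal.continuum)
    (χ : G →+ AddCircle (1 : ℝ)) (hχ : Continuous χ) : χ = 0 := by
  by_contra hne
  have hrange : χ.range = ⊤ := by
    refine AddCircle.addSubgroup_eq_top_of_isPreconnected ?_
      (mt AddMonoidHom.range_eq_bot_iff.mp hne)
    simpa only [AddMonoidHom.coe_range] using isPreconnected_range hχ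
  have hle := LinearMap.lift_rank_le_of_surjective χ.toIntLinearMap
    (AddMonoidHom.range_eq_top.mp hrange)
  have h𝔠 := (lift_le.mpr (AddCircle.continuum_le_rank_int 1)).trans hle
  rw [lift_continuum, lift_uzero] at h𝔠
  exact h𝔠.not_gt hrank

/-- A connected topological abelian group whose free rank (the maximal cardinality of a
`ℤ`-independent subset, i.e. `Module.rank ℤ G`) is strictly less than the continuum has
only trivial continuous characters. -/
theorem minAP_of_connected_small_rank (G : Type*) [AddCommGroup G] [TopologicalSpace G]
    [IsTopologicalAddGroup G] [ConnectedSpace G]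
    (hrank : Module.rank ℤ G < Cardinal.continuum)
    (χ : G →+ AddCircle (1 : ℝ)) (hχ : Continuous χ) : χ = 0 :=
  minAP_of_connected_small_rank_general G hrank χ hχ
end
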